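/- arXiv:2509.05410 — 3 statements merged into one kernel-verified Lean document; each statement's English description precedes it below -/
import Mathlib

section
/- Let A and B be 2×2 Hermitian matrices with ρ(A+B) = ρ(A) + ρ(B), where ρ denotes the Schatten 1-norm. Then either (i) A and B commute and, for any common orthonormal eigenbasis, the eigenvalue of A and the eigenvalue of B corresponding to the same eigenvector have the same sign, or (ii) A and B do not commute and all four eigenvalues of A and B have the same sign. Here 0 is considered to have the same sign as every real number. -/
open scoped ComplexOrder

/-- The Schatten 1-norm (trace norm) of a complex matrix: `ρ(M) = Tr √(Mᴴ M)`. -/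
noncomputable def traceNorm {n : Type*} [Fintype n] [DecidableEq n]
    (M : Matrix n n ℂ) : ℝ :=
  ((Matrix.posSemidef_conjTranspose_mul_self M).1.eigenvectorUnitary.1 *
    Matrix.diagonal (((↑) : ℝ → ℂ) ∘ Real.sqrt ∘ (Matrix.posSemidef_conjTranspose_mul_self M).1.eigenvalues) *
    (star (Matrix.posSemidef_conjTranspose_mul_self M).1.eigenvectorUnitary : Matrix n n ℂ)).trace.re

open Matrix Complex

section Aux

set_option linter.unusedSectionVars false

variable {n : Type*} [Fintype n] [DecidableEq n]

theorem traceNorm_herm {M : Matrix n n ℂ} (hM : M.IsHermitian) :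
    traceNorm M = ∑ i, |hM.eigenvalues i| := by
  set U : Matrix n n ℂ := (hM.eigenvectorUnitary : Matrix n n ℂ) with hU
  have hUU : U * star U = 1 := (Matrix.mem_unitaryGroup_iff).mp hM.eigenvectorUnitary.2
  have hUU' : star U * U = 1 := (Matrix.mem_unitaryGroup_iff').mp hM.eigenvectorUnitary.2
  set T : Matrix n n ℂ :=
    U * diagonal (fun i => Complex.ofReal |hM.eigenvalues i|) * star U with hT
  have hTpsd : T.PosSemidef := by
    apply Matrix.PosSemidef.mul_mul_conjTranspose_same (B := U)
    exact Matrix.posSemidef_diagonal_iff.mpr fun i => by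
      rw [Complex.le_def]
      simp [abs_nonneg]
  have hspec : M = U * diagonal (RCLike.ofReal ∘ hM.eigenvalues) * star U := by
    rw [hU]; exact hM.spectral_theorem
  have hsq : T ^ 2 = Mᴴ * M := by
    rw [hM.eq, pow_two, hT]
    conv_rhs => rw [hspec]
    simp only [Matrix.mul_assoc]
    rw [← Matrix.mul_assoc (star U) U, hUU', Matrix.one_mul,
      ← Matrix.mul_assoc (star U) U, hUU', Matrix.one_mul,
      ← Matrix.mul_assoc (diagonal _) (diagonal _), diagonal_mul_diagonal,
      ← Matrix.mul_assoc (diagonal _) (diagonal _), diagonal_mul_diagonal]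
    have habs : (fun i => Complex.ofReal |hM.eigenvalues i| * Complex.ofReal |hM.eigenvalues i|)
        = fun i => ((RCLike.ofReal ∘ hM.eigenvalues) i : ℂ) * (RCLike.ofReal ∘ hM.eigenvalues) i := by
      funext i
      show (Complex.ofReal |hM.eigenvalues i| * Complex.ofReal |hM.eigenvalues i|)
        = Complex.ofReal (hM.eigenvalues i) * Complex.ofReal (hM.eigenvalues i)
      rw [← Complex.ofReal_mul, ← Complex.ofReal_mul, abs_mul_abs_self]
    rw [habs]
  have heq : T = ((Matrix.posSemidef_conjTranspose_mul_self M).1.eigenvectorUnitary.1 *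
      Matrix.diagonal (((↑) : ℝ → ℂ) ∘ Real.sqrt ∘ (Matrix.posSemidef_conjTranspose_mul_self M).1.eigenvalues) *
      (star (Matrix.posSemidef_conjTranspose_mul_self M).1.eigenvectorUnitary : Matrix n n ℂ)) := by
    have hc := (Matrix.posSemidef_conjTranspose_mul_self M).1.cfc_eq Real.sqrt
    rw [Matrix.IsHermitian.cfc, Unitary.conjStarAlgAut_apply] at hc
    have hTsa : IsSelfAdjoint T := hTpsd.1
    refine Eq.trans ?_ hc
    rw [← hsq, ← cfc_comp_pow Real.sqrt 2 T Real.continuous_sqrt.continuousOn hTsa]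
    rw [cfc_congr (g := fun x => x) (a := T)]
    · exact (cfc_id' ℝ T hTsa).symm
    intro x hx
    rw [hTpsd.1.spectrum_real_eq_range_eigenvalues] at hx
    obtain ⟨i, rfl⟩ := hx
    simp [Real.sqrt_sq (hTpsd.eigenvalues_nonneg i)]
  rw [traceNorm, ← heq, hT, Matrix.trace_mul_cycle, hUU', Matrix.one_mul,
    Matrix.trace_diagonal]
  rw [Complex.re_sum]
  simp


noncomputable def Dmat {M : Matrix n n ℂ} (hM : M.IsHermitian) (V : Matrix n n ℂ) :
    Matrix n n ℂ :=
  star (hM.eigenvectorUnitary : Matrix n n ℂ) * V * (hM.eigenvectorUnitary : Matrix n n ℂ)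

theorem Dmat_mem {M V : Matrix n n ℂ} (hM : M.IsHermitian)
    (hV : V ∈ Matrix.unitaryGroup n ℂ) : Dmat hM V ∈ Matrix.unitaryGroup n ℂ :=
  mul_mem (mul_mem (Unitary.star_mem hM.eigenvectorUnitary.2) hV) hM.eigenvectorUnitary.2

theorem Dmat_row {M V : Matrix n n ℂ} (hM : M.IsHermitian)
    (hV : V ∈ Matrix.unitaryGroup n ℂ) (i : n) :
    ∑ j, Complex.normSq (Dmat hM V i j) = 1 := by
  have h1 : (Dmat hM V * star (Dmat hM V)) i i = (1 : Matrix n n ℂ) i i := by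
    rw [(Matrix.mem_unitaryGroup_iff).mp (Dmat_mem hM hV)]
  rw [Matrix.mul_apply] at h1
  simp only [Matrix.star_apply, Matrix.one_apply_eq] at h1
  have h2 : ∀ j, Dmat hM V i j * star (Dmat hM V i j)
      = (Complex.normSq (Dmat hM V i j) : ℂ) := fun j => Complex.mul_conj _
  rw [Finset.sum_congr rfl (fun j _ => h2 j)] at h1
  have := congrArg Complex.re h1
  rw [Complex.re_sum] at this
  simpa using this

theorem Dmat_col {M V : Matrix n n ℂ} (hM : M.IsHermitian)
    (hV : V ∈ Matrix.unitaryGroup n ℂ) (i : n) :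
    ∑ j, Complex.normSq (Dmat hM V j i) = 1 := by
  have h1 : (star (Dmat hM V) * Dmat hM V) i i = (1 : Matrix n n ℂ) i i := by
    rw [(Matrix.mem_unitaryGroup_iff').mp (Dmat_mem hM hV)]
  rw [Matrix.mul_apply] at h1
  simp only [Matrix.star_apply, Matrix.one_apply_eq] at h1
  have h2 : ∀ j, star (Dmat hM V j i) * Dmat hM V j i
      = (Complex.normSq (Dmat hM V j i) : ℂ) := fun j => by
    rw [mul_comm]; exact Complex.mul_conj _
  rw [Finset.sum_congr rfl (fun j _ => h2 j)] at h1
  have := congrArg Complex.re h1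
  rw [Complex.re_sum] at this
  simpa using this

theorem Dmat_diag_le {M V : Matrix n n ℂ} (hM : M.IsHermitian)
    (hV : V ∈ Matrix.unitaryGroup n ℂ) (i : n) : |(Dmat hM V i i).re| ≤ 1 := by
  have h1 := Dmat_row hM hV i
  have h2 : Complex.normSq (Dmat hM V i i) ≤ 1 := by
    rw [← h1]
    exact Finset.single_le_sum (f := fun j => Complex.normSq (Dmat hM V i j))
      (fun j _ => Complex.normSq_nonneg _) (Finset.mem_univ i)
  rw [Complex.normSq_apply] at h2
  nlinarith [abs_nonneg (Dmat hM V i i).re, _root_.sq_abs (Dmat hM V i i).re,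
    sq_nonneg (Dmat hM V i i).im]

theorem trace_formula {M : Matrix n n ℂ} (hM : M.IsHermitian) (V : Matrix n n ℂ) :
    (M * V).trace = ∑ i, (hM.eigenvalues i : ℂ) * (Dmat hM V i i) := by
  set U : Matrix n n ℂ := (hM.eigenvectorUnitary : Matrix n n ℂ) with hU
  have hspec : M = U * diagonal (RCLike.ofReal ∘ hM.eigenvalues) * star U := by
    rw [hU]; exact hM.spectral_theorem
  conv_lhs => rw [hspec]
  rw [Matrix.mul_assoc (U * _) (star U) V, Matrix.trace_mul_comm, ← Matrix.mul_assoc]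
  rw [Matrix.trace]
  apply Finset.sum_congr rfl
  intro i _
  rw [Matrix.diag_apply, Matrix.mul_diagonal]
  rw [show (Dmat hM V) = star U * V * U from rfl]
  rw [mul_comm]
  rfl

theorem msgn_lemma (a : ℝ) : a * (if 0 < a then (1:ℝ) else -1) = |a| := by
  split_ifs with h
  · rw [abs_of_pos h]; ring
  · rw [abs_of_nonpos (le_of_not_gt h)]; ring

theorem trace_re_le {M V : Matrix n n ℂ} (hM : M.IsHermitian)
    (hV : V ∈ Matrix.unitaryGroup n ℂ) : ((M * V).trace).re ≤ traceNorm M := by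
  rw [trace_formula hM V, traceNorm_herm hM, Complex.re_sum]
  apply Finset.sum_le_sum
  intro i _
  have h1 : ((hM.eigenvalues i : ℂ) * Dmat hM V i i).re
      = hM.eigenvalues i * (Dmat hM V i i).re := by
    simp [Complex.mul_re]
  rw [h1]
  calc hM.eigenvalues i * (Dmat hM V i i).re
      ≤ |hM.eigenvalues i * (Dmat hM V i i).re| := le_abs_self _
    _ = |hM.eigenvalues i| * |(Dmat hM V i i).re| := abs_mul _ _
    _ ≤ |hM.eigenvalues i| * 1 := by
        exact mul_le_mul_of_nonneg_left (Dmat_diag_le hM hV i) (abs_nonneg _)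
    _ = |hM.eigenvalues i| := mul_one _

theorem Dfact {M V : Matrix n n ℂ} (hM : M.IsHermitian)
    (hV : V ∈ Matrix.unitaryGroup n ℂ)
    (heq : ((M * V).trace).re = traceNorm M) (i : n) (hi : hM.eigenvalues i ≠ 0) :
    Dmat hM V i i = ((if 0 < hM.eigenvalues i then (1:ℝ) else -1 : ℝ) : ℂ)
    ∧ ∀ j, j ≠ i → Dmat hM V i j = 0 ∧ Dmat hM V j i = 0 := by
  -- termwise equality
  have hsum : ∑ j, hM.eigenvalues j * (Dmat hM V j j).re = ∑ j, |hM.eigenvalues j| := by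
    rw [← traceNorm_herm hM, ← heq, trace_formula hM V, Complex.re_sum]
    apply Finset.sum_congr rfl
    intro j _
    simp [Complex.mul_re]
  have hle : ∀ j ∈ Finset.univ, hM.eigenvalues j * (Dmat hM V j j).re ≤ |hM.eigenvalues j| := by
    intro j _
    calc hM.eigenvalues j * (Dmat hM V j j).re
        ≤ |hM.eigenvalues j * (Dmat hM V j j).re| := le_abs_self _
      _ = |hM.eigenvalues j| * |(Dmat hM V j j).re| := abs_mul _ _
      _ ≤ |hM.eigenvalues j| * 1 :=
          mul_le_mul_of_nonneg_left (Dmat_diag_le hM hV j) (abs_nonneg _)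
      _ = |hM.eigenvalues j| := mul_one _
  have hterm : hM.eigenvalues i * (Dmat hM V i i).re = |hM.eigenvalues i| :=
    ((Finset.sum_eq_sum_iff_of_le hle).mp hsum) i (Finset.mem_univ i)
  -- re of diagonal entry
  set r := (Dmat hM V i i).re with hr
  have hre : r = if 0 < hM.eigenvalues i then (1:ℝ) else -1 := by
    have := msgn_lemma (hM.eigenvalues i)
    have h2 : hM.eigenvalues i * r
        = hM.eigenvalues i * (if 0 < hM.eigenvalues i then (1:ℝ) else -1) := by
      rw [hterm, this]
    exact mul_left_cancel₀ hi h2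
  have hr2 : r^2 = 1 := by rw [hre]; split_ifs <;> norm_num
  have hnorm1 : Complex.normSq (Dmat hM V i i) ≤ 1 := by
    rw [← Dmat_row hM hV i]
    exact Finset.single_le_sum (f := fun j => Complex.normSq (Dmat hM V i j))
      (fun j _ => Complex.normSq_nonneg _) (Finset.mem_univ i)
  have him : (Dmat hM V i i).im = 0 := by
    rw [Complex.normSq_apply] at hnorm1
    nlinarith [sq_nonneg (Dmat hM V i i).im]
  have hdiag : Dmat hM V i i = ((if 0 < hM.eigenvalues i then (1:ℝ) else -1 : ℝ) : ℂ) := by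
    apply Complex.ext
    · rw [← hre]; simp; exact hr.symm
    · rw [him]; simp
  refine ⟨hdiag, ?_⟩
  have hnseq : Complex.normSq (Dmat hM V i i) = 1 := by
    rw [Complex.normSq_apply, him, ← hr]
    nlinarith
  intro j hj
  constructor
  · have h1 := Dmat_row hM hV i
    rw [← Finset.add_sum_erase _ _ (Finset.mem_univ i), hnseq] at h1
    have h0 : ∑ k ∈ Finset.univ.erase i, Complex.normSq (Dmat hM V i k) = 0 := by linarith
    have := (Finset.sum_eq_zero_iff_of_nonneg
      (fun k _ => Complex.normSq_nonneg (Dmat hM V i k))).mp h0 j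
      (Finset.mem_erase.mpr ⟨hj, Finset.mem_univ j⟩)
    exact Complex.normSq_eq_zero.mp this
  · have h1 := Dmat_col hM hV i
    rw [← Finset.add_sum_erase _ _ (Finset.mem_univ i), hnseq] at h1
    have h0 : ∑ k ∈ Finset.univ.erase i, Complex.normSq (Dmat hM V k i) = 0 := by linarith
    have := (Finset.sum_eq_zero_iff_of_nonneg
      (fun k _ => Complex.normSq_nonneg (Dmat hM V k i))).mp h0 j
      (Finset.mem_erase.mpr ⟨hj, Finset.mem_univ j⟩)
    exact Complex.normSq_eq_zero.mp this

theorem V_eq_conj {M V : Matrix n n ℂ} (hM : M.IsHermitian) :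
    (hM.eigenvectorUnitary : Matrix n n ℂ) * Dmat hM V
      * star (hM.eigenvectorUnitary : Matrix n n ℂ) = V := by
  set U : Matrix n n ℂ := (hM.eigenvectorUnitary : Matrix n n ℂ) with hU
  have hUU : U * star U = 1 := (Matrix.mem_unitaryGroup_iff).mp hM.eigenvectorUnitary.2
  rw [show Dmat hM V = star U * V * U from rfl]
  simp only [Matrix.mul_assoc]
  rw [hUU, Matrix.mul_one, ← Matrix.mul_assoc, hUU, Matrix.one_mul]

theorem commute_of_eq {M V : Matrix n n ℂ} (hM : M.IsHermitian)
    (hV : V ∈ Matrix.unitaryGroup n ℂ) (heq : ((M * V).trace).re = traceNorm M) :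
    M * V = V * M := by
  set U : Matrix n n ℂ := (hM.eigenvectorUnitary : Matrix n n ℂ) with hU
  have hUU : U * star U = 1 := (Matrix.mem_unitaryGroup_iff).mp hM.eigenvectorUnitary.2
  have hUU' : star U * U = 1 := (Matrix.mem_unitaryGroup_iff').mp hM.eigenvectorUnitary.2
  have hspec : M = U * diagonal (RCLike.ofReal ∘ hM.eigenvalues) * star U := by
    rw [hU]; exact hM.spectral_theorem
  have hcomm : diagonal (RCLike.ofReal ∘ hM.eigenvalues) * Dmat hM V
      = Dmat hM V * diagonal (RCLike.ofReal ∘ hM.eigenvalues) := by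
    ext i j
    rw [Matrix.diagonal_mul, Matrix.mul_diagonal]
    by_cases hij : i = j
    · subst hij; ring
    · by_cases hi : hM.eigenvalues i = 0
      · by_cases hj : hM.eigenvalues j = 0
        · simp [Function.comp, hi, hj]
        · rw [((Dfact hM hV heq j hj).2 i hij).2]; simp
      · rw [((Dfact hM hV heq i hi).2 j (Ne.symm hij)).1]; simp
  conv_lhs => rw [hspec, ← V_eq_conj hM (V := V)]
  conv_rhs => rw [hspec, ← V_eq_conj hM (V := V)]
  simp only [Matrix.mul_assoc]
  rw [← Matrix.mul_assoc (star U) U, hUU', Matrix.one_mul,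
    ← Matrix.mul_assoc (star U) U, hUU', Matrix.one_mul]
  refine congrArg (U * ·) ?_
  rw [← Matrix.mul_assoc, hcomm, Matrix.mul_assoc]

theorem eigvec_action {M V : Matrix n n ℂ} (hM : M.IsHermitian)
    (hV : V ∈ Matrix.unitaryGroup n ℂ) (heq : ((M * V).trace).re = traceNorm M)
    {v : n → ℂ} {a : ℝ} (ha : a ≠ 0) (hv : M *ᵥ v = (a:ℂ) • v) :
    V *ᵥ v = ((if 0 < a then (1:ℝ) else -1 : ℝ) : ℂ) • v := by
  set U : Matrix n n ℂ := (hM.eigenvectorUnitary : Matrix n n ℂ) with hU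
  have hUU : U * star U = 1 := (Matrix.mem_unitaryGroup_iff).mp hM.eigenvectorUnitary.2
  set x : n → ℂ := star U *ᵥ v with hx
  have hUx : U *ᵥ x = v := by
    rw [hx, Matrix.mulVec_mulVec, hUU, Matrix.one_mulVec]
  have h1 : diagonal (RCLike.ofReal ∘ hM.eigenvalues) *ᵥ x = (a:ℂ) • x := by
    rw [← hM.conjStarAlgAut_star_eigenvectorUnitary, Unitary.conjStarAlgAut_apply, Unitary.coe_star, star_star]
    rw [show star (hM.eigenvectorUnitary : Matrix n n ℂ) * M
        * (hM.eigenvectorUnitary : Matrix n n ℂ) = star U * M * U from rfl]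
    rw [← Matrix.mulVec_mulVec, ← Matrix.mulVec_mulVec, hUx, hv, Matrix.mulVec_smul]
  have hdx : ∀ i, (hM.eigenvalues i : ℂ) * x i = (a:ℂ) * x i := by
    intro i
    have := congrFun h1 i
    simpa [Matrix.mulVec_diagonal] using this
  have hD : Dmat hM V *ᵥ x = ((if 0 < a then (1:ℝ) else -1 : ℝ) : ℂ) • x := by
    funext j
    rw [Matrix.mulVec, dotProduct]
    have hterm : ∀ i, Dmat hM V j i * x i
        = (if i = j then ((if 0 < a then (1:ℝ) else -1 : ℝ) : ℂ) * x i else 0) := by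
      intro i
      by_cases hxi : x i = 0
      · split_ifs <;> simp [hxi]
      · have hev : hM.eigenvalues i = a := by
          have := mul_right_cancel₀ hxi (hdx i)
          exact_mod_cast this
        have hine : hM.eigenvalues i ≠ 0 := by rw [hev]; exact ha
        have dfact := Dfact hM hV heq i hine
        by_cases hij : j = i
        · subst hij
          rw [dfact.1, hev]
          simp
        · rw [(dfact.2 j hij).2]
          simp [Ne.symm hij]
    rw [Finset.sum_congr rfl (fun i _ => hterm i), Finset.sum_ite_eq' Finset.univ j]
    simp
  rw [← V_eq_conj hM (V := V), ← Matrix.mulVec_mulVec, ← Matrix.mulVec_mulVec, ← hx, hD,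
    Matrix.mulVec_smul, hUx]

theorem sgn_eq_imp {a b : ℝ} (ha : a ≠ 0) (hb : b ≠ 0)
    (h : (if 0 < a then (1:ℝ) else -1) = (if 0 < b then (1:ℝ) else -1)) : 0 < a * b := by
  rcases ha.lt_or_gt with ha' | ha' <;> rcases hb.lt_or_gt with hb' | hb'
  · exact mul_pos_of_neg_of_neg ha' hb'
  · rw [if_neg (not_lt.mpr ha'.le), if_pos hb'] at h; norm_num at h
  · rw [if_pos ha', if_neg (not_lt.mpr hb'.le)] at h; norm_num at h
  · exact mul_pos ha' hb'

theorem smul_cancel_vec {v : n → ℂ} (hv : v ≠ 0) {c d : ℝ}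
    (h : (c:ℂ) • v = (d:ℂ) • v) : c = d := by
  obtain ⟨j, hj⟩ := Function.ne_iff.mp hv
  simp only [Pi.zero_apply] at hj
  have h2 := congrFun h j
  simp only [Pi.smul_apply, smul_eq_mul] at h2
  have := mul_right_cancel₀ hj h2
  exact_mod_cast this


end Aux

/-- For 2×2 Hermitian matrices with `ρ(A+B) = ρ(A) + ρ(B)`, either `A` and `B` commute
and corresponding eigenvalues (of any common eigenvector) have the same sign, or `A` and `B`
do not commute and all four eigenvalues of `A` and `B` have the same sign
(0 counts as having the same sign as everything). -/
theorem hermitian_two_by_two_traceNorm_saturation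
    (A B : Matrix (Fin 2) (Fin 2) ℂ)
    (hA : A.IsHermitian) (hB : B.IsHermitian)
    (h : traceNorm (A + B) = traceNorm A + traceNorm B) :
    (Commute A B ∧ ∀ (v : Fin 2 → ℂ) (a b : ℝ), v ≠ 0 →
        A.mulVec v = (a : ℂ) • v → B.mulVec v = (b : ℂ) • v → 0 ≤ a * b)
    ∨ (¬ Commute A B ∧ ∀ a b : ℝ,
        ((∃ v, v ≠ 0 ∧ A.mulVec v = (a : ℂ) • v) ∨
          (∃ v, v ≠ 0 ∧ B.mulVec v = (a : ℂ) • v)) →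
        ((∃ w, w ≠ 0 ∧ A.mulVec w = (b : ℂ) • w) ∨
          (∃ w, w ≠ 0 ∧ B.mulVec w = (b : ℂ) • w)) →
        0 ≤ a * b) := by
  have hAB : (A + B).IsHermitian := hA.add hB
  set W : Matrix (Fin 2) (Fin 2) ℂ := (hAB.eigenvectorUnitary : Matrix (Fin 2) (Fin 2) ℂ)
    with hW
  have hWW : W * star W = 1 := (Matrix.mem_unitaryGroup_iff).mp hAB.eigenvectorUnitary.2
  have hWW' : star W * W = 1 := (Matrix.mem_unitaryGroup_iff').mp hAB.eigenvectorUnitary.2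
  set s : Fin 2 → ℝ := fun i => if 0 < hAB.eigenvalues i then (1:ℝ) else -1 with hsdef
  set Vm : Matrix (Fin 2) (Fin 2) ℂ := W * diagonal (fun i => ((s i : ℝ) : ℂ)) * star W
    with hVmdef
  have hss : ∀ i, (s i) * (s i) = 1 := by
    intro i
    rw [hsdef]
    simp only
    split_ifs <;> norm_num
  have hdgu : diagonal (fun i => ((s i : ℝ) : ℂ)) ∈ Matrix.unitaryGroup (Fin 2) ℂ := by
    apply Matrix.mem_unitaryGroup_iff.mpr
    ext i j
    rw [Matrix.star_eq_conjTranspose, Matrix.diagonal_conjTranspose, diagonal_mul_diagonal]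
    by_cases hij : i = j
    · subst hij
      rw [Matrix.diagonal_apply_eq, Matrix.one_apply_eq]
      simp only [Pi.star_apply, Complex.star_def, Complex.conj_ofReal]
      rw [← Complex.ofReal_mul, hss i, Complex.ofReal_one]
    · rw [Matrix.diagonal_apply_ne _ hij, Matrix.one_apply_ne hij]
  have hVu : Vm ∈ Matrix.unitaryGroup (Fin 2) ℂ :=
    mul_mem (mul_mem hAB.eigenvectorUnitary.2 hdgu)
      (Unitary.star_mem hAB.eigenvectorUnitary.2)
  have hDmatVm : Dmat hAB Vm = diagonal (fun i => ((s i : ℝ) : ℂ)) := by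
    rw [show Dmat hAB Vm = star W * Vm * W from rfl, hVmdef]
    simp only [Matrix.mul_assoc]
    rw [hWW', Matrix.mul_one, ← Matrix.mul_assoc, hWW', Matrix.one_mul]
  have htr : (((A+B) * Vm).trace).re = traceNorm (A+B) := by
    rw [trace_formula hAB Vm, hDmatVm, traceNorm_herm hAB, Complex.re_sum]
    apply Finset.sum_congr rfl
    intro i _
    rw [Matrix.diagonal_apply_eq, ← Complex.ofReal_mul, Complex.ofReal_re, hsdef]
    exact msgn_lemma _
  have hadd : (((A+B) * Vm).trace).re = ((A * Vm).trace).re + ((B * Vm).trace).re := by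
    rw [Matrix.add_mul, Matrix.trace_add, Complex.add_re]
  have hleA := trace_re_le hA hVu
  have hleB := trace_re_le hB hVu
  have heqA : ((A * Vm).trace).re = traceNorm A := by linarith
  have heqB : ((B * Vm).trace).re = traceNorm B := by linarith
  by_cases hs : s 0 = s 1
  · -- Vm is scalar
    have hdgscalar : diagonal (fun i => ((s i : ℝ) : ℂ)) = ((s 0 : ℝ) : ℂ) • 1 := by
      ext i j
      by_cases hij : i = j
      · subst hij
        rw [Matrix.diagonal_apply_eq]
        fin_cases i <;> simp [hs]
      · rw [Matrix.diagonal_apply_ne _ hij]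
        simp [Matrix.one_apply_ne hij]
    have hVscalar : Vm = ((s 0 : ℝ) : ℂ) • 1 := by
      rw [hVmdef, hdgscalar, Matrix.mul_smul, Matrix.smul_mul, Matrix.mul_one, hWW]
    have key : ∀ a : ℝ, a ≠ 0 →
        ((∃ v, v ≠ 0 ∧ A.mulVec v = (a : ℂ) • v) ∨
          (∃ v, v ≠ 0 ∧ B.mulVec v = (a : ℂ) • v)) →
        (if 0 < a then (1:ℝ) else -1) = s 0 := by
      intro a ha hex
      have hact : ∃ v, v ≠ 0 ∧ Vm *ᵥ v = ((if 0 < a then (1:ℝ) else -1 : ℝ) : ℂ) • v := by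
        rcases hex with ⟨v, hv, hav⟩ | ⟨v, hv, hav⟩
        · exact ⟨v, hv, eigvec_action hA hVu heqA ha hav⟩
        · exact ⟨v, hv, eigvec_action hB hVu heqB ha hav⟩
      obtain ⟨v, hv, hact⟩ := hact
      have h2 : Vm *ᵥ v = ((s 0 : ℝ) : ℂ) • v := by
        rw [hVscalar, Matrix.smul_mulVec, Matrix.one_mulVec]
      exact smul_cancel_vec hv (hact.symm.trans h2)
    have prodfact : ∀ a b : ℝ,
        ((∃ v, v ≠ 0 ∧ A.mulVec v = (a : ℂ) • v) ∨
          (∃ v, v ≠ 0 ∧ B.mulVec v = (a : ℂ) • v)) →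
        ((∃ w, w ≠ 0 ∧ A.mulVec w = (b : ℂ) • w) ∨
          (∃ w, w ≠ 0 ∧ B.mulVec w = (b : ℂ) • w)) →
        0 ≤ a * b := by
      intro a b hea heb
      by_cases ha : a = 0
      · simp [ha]
      by_cases hb : b = 0
      · simp [hb]
      exact le_of_lt (sgn_eq_imp ha hb ((key a ha hea).trans (key b hb heb).symm))
    by_cases hC : Commute A B
    · exact Or.inl ⟨hC, fun v a b hv hAv hBv =>
        prodfact a b (Or.inl ⟨v, hv, hAv⟩) (Or.inr ⟨v, hv, hBv⟩)⟩
    · exact Or.inr ⟨hC, prodfact⟩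
  · -- Vm is non-scalar: A and B commute
    have hsne : ∀ i j : Fin 2, i ≠ j → ((s i : ℝ) : ℂ) ≠ ((s j : ℝ) : ℂ) := by
      intro i j hij hc
      have hc' : s i = s j := Complex.ofReal_inj.mp hc
      fin_cases i <;> fin_cases j <;> simp_all
    have hdiagcomm : ∀ {M : Matrix (Fin 2) (Fin 2) ℂ} (hM : M.IsHermitian),
        M * Vm = Vm * M → ∃ d : Fin 2 → ℂ, Dmat hAB M = diagonal d := by
      intro M hM hc
      have hc' : Dmat hAB M * diagonal (fun i => ((s i : ℝ) : ℂ))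
          = diagonal (fun i => ((s i : ℝ) : ℂ)) * Dmat hAB M := by
        have h1 : star W * (M * Vm) * W = star W * (Vm * M) * W := by rw [hc]
        rw [show Dmat hAB M = star W * M * W from rfl]
        calc (star W * M * W) * diagonal (fun i => ((s i : ℝ) : ℂ))
            = star W * (M * Vm) * W := by
              rw [hVmdef]
              simp only [Matrix.mul_assoc]
              rw [hWW', Matrix.mul_one]
          _ = star W * (Vm * M) * W := h1
          _ = diagonal (fun i => ((s i : ℝ) : ℂ)) * (star W * M * W) := by
              rw [hVmdef]
              simp only [Matrix.mul_assoc]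
              rw [← Matrix.mul_assoc (star W) W, hWW', Matrix.one_mul]
      refine ⟨fun i => Dmat hAB M i i, ?_⟩
      ext i j
      by_cases hij : i = j
      · subst hij; rw [Matrix.diagonal_apply_eq]
      · rw [Matrix.diagonal_apply_ne _ hij]
        have h2 : Dmat hAB M i j * ((s j : ℝ) : ℂ) = ((s i : ℝ) : ℂ) * Dmat hAB M i j := by
          have := congrFun (congrFun hc' i) j
          rwa [Matrix.mul_diagonal, Matrix.diagonal_mul] at this
        have h3 : Dmat hAB M i j * (((s j : ℝ) : ℂ) - ((s i : ℝ) : ℂ)) = 0 := by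
          rw [mul_sub, h2]; ring
        rcases mul_eq_zero.mp h3 with h4 | h4
        · exact h4
        · exact absurd (sub_eq_zero.mp h4) (hsne j i (Ne.symm hij))
    obtain ⟨dA, hdA⟩ := hdiagcomm hA (commute_of_eq hA hVu heqA)
    obtain ⟨dB, hdB⟩ := hdiagcomm hB (commute_of_eq hB hVu heqB)
    have hA2 : W * diagonal dA * star W = A := by rw [← hdA]; exact V_eq_conj hAB
    have hB2 : W * diagonal dB * star W = B := by rw [← hdB]; exact V_eq_conj hAB
    have hCom : A * B = B * A := by
      rw [← hA2, ← hB2]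
      simp only [Matrix.mul_assoc]
      rw [← Matrix.mul_assoc (star W) W, hWW', Matrix.one_mul,
        ← Matrix.mul_assoc (star W) W, hWW', Matrix.one_mul]
      congr 1
      rw [← Matrix.mul_assoc, ← Matrix.mul_assoc, diagonal_mul_diagonal, diagonal_mul_diagonal]
      have hcm : (fun i => dA i * dB i) = (fun i => dB i * dA i) := by
        funext i; exact mul_comm _ _
      rw [hcm]
    refine Or.inl ⟨hCom, ?_⟩
    intro v a b hv hAv hBv
    by_cases ha : a = 0
    · simp [ha]
    by_cases hb : b = 0
    · simp [hb]
    have h1 := eigvec_action hA hVu heqA ha hAv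
    have h2 := eigvec_action hB hVu heqB hb hBv
    exact le_of_lt (sgn_eq_imp ha hb (smul_cancel_vec hv (h1 ▸ h2 ▸ rfl)))
end

section
/- Let A and B be 2×2 Hermitian matrices that do not commute, with orthonormal eigenvectors {v_m} of A+B, {x_m} of A, and {y_m} of B. Then for all indices m, n, the inner products v_m† x_n and v_m† y_n are nonzero. -/
open Matrix

private lemma dot_expand (v : Fin 2 → Fin 2 → ℂ)
    (hvON : ∀ m n, dotProduct (star (v m)) (v n) = if m = n then 1 else 0)
    (w : Fin 2 → ℂ) :
    w = (star (v 0) ⬝ᵥ w) • v 0 + (star (v 1) ⬝ᵥ w) • v 1 := by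
  have hdot : ∀ (i : Fin 2) (c : Fin 2 → ℂ),
      star (v i) ⬝ᵥ (c 0 • v 0 + c 1 • v 1) = c i := by
    intro i c
    fin_cases i <;> simp [dotProduct_add, dotProduct_smul, hvON]
  have hli : LinearIndependent ℂ v := by
    rw [Fintype.linearIndependent_iff]
    intro g hg i
    rw [Fin.sum_univ_two] at hg
    have := congrArg (fun u => star (v i) ⬝ᵥ u) hg
    simpa [hdot i g] using this
  have hcard : Fintype.card (Fin 2) = Module.finrank ℂ (Fin 2 → ℂ) := by simp
  have hspan := (basisOfLinearIndependentOfCardEqFinrank hli hcard).span_eq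
  rw [coe_basisOfLinearIndependentOfCardEqFinrank] at hspan
  have hw : w ∈ Submodule.span ℂ (Set.range v) := by rw [hspan]; trivial
  obtain ⟨c, hc⟩ := (Submodule.mem_span_range_iff_exists_fun ℂ).1 hw
  rw [Fin.sum_univ_two] at hc
  rw [← hc, hdot, hdot]


private lemma overlap_ne (A B : Matrix (Fin 2) (Fin 2) ℂ) (hc : ¬ Commute A B)
    (v x : Fin 2 → Fin 2 → ℂ) (μ a : Fin 2 → ℝ)
    (hvON : ∀ m n, dotProduct (star (v m)) (v n) = if m = n then 1 else 0)
    (hxON : ∀ m n, dotProduct (star (x m)) (x n) = if m = n then 1 else 0)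
    (hv : ∀ m, (A + B).mulVec (v m) = (μ m : ℂ) • v m)
    (hx : ∀ m, A.mulVec (x m) = (a m : ℂ) • x m) :
    ∀ m n, dotProduct (star (v m)) (x n) ≠ 0 := by
  intro m n h
  apply hc
  set m' := m + 1 with hm'
  set n' := n + 1 with hn'
  have hmm : m' ≠ m := by fin_cases m <;> decide
  have hnn : n ≠ n' := by fin_cases n <;> decide
  have expand : ∀ w, w = (star (v m) ⬝ᵥ w) • v m + (star (v m') ⬝ᵥ w) • v m' := by
    intro w
    have h0 := dot_expand v hvON w
    fin_cases m
    · simpa [hm'] using h0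
    · rw [add_comm] at h0; simpa [hm'] using h0
  -- x n is proportional to v m'
  have hxn : x n = (star (v m') ⬝ᵥ x n) • v m' := by
    have h1 := expand (x n); rwa [h, zero_smul, zero_add] at h1
  set c := star (v m') ⬝ᵥ x n with hc0
  have hcne : c ≠ 0 := by
    intro h0
    have h1 := hxON n n
    rw [if_pos rfl, hxn, h0, zero_smul] at h1
    simp at h1
  have hAvm' : A.mulVec (v m') = (a n : ℂ) • v m' := by
    have h2 := hx n
    rw [hxn, mulVec_smul, smul_comm] at h2
    exact smul_right_injective _ hcne h2
  -- v m' ⊥ x n', so x n' is proportional to v m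
  have hortho : star (v m') ⬝ᵥ x n' = 0 := by
    have h3 := hxON n n'
    rw [if_neg hnn, hxn, star_smul, smul_dotProduct] at h3
    rcases mul_eq_zero.1 h3 with h4 | h4
    · exact absurd h4 (star_ne_zero.2 hcne)
    · exact h4
  have hxn' : x n' = (star (v m) ⬝ᵥ x n') • v m := by
    have h5 := expand (x n'); rwa [hortho, zero_smul, add_zero] at h5
  set d := star (v m) ⬝ᵥ x n' with hd0
  have hdne : d ≠ 0 := by
    intro h0
    have h1 := hxON n' n'
    rw [if_pos rfl, hxn', h0, zero_smul] at h1
    simp at h1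
  have hAvm : A.mulVec (v m) = (a n' : ℂ) • v m := by
    have h2 := hx n'
    rw [hxn', mulVec_smul, smul_comm] at h2
    exact smul_right_injective _ hdne h2
  -- B eigenvectors
  have hB : ∀ i : Fin 2, ∃ α β : ℂ, A.mulVec (v i) = α • v i ∧ B.mulVec (v i) = β • v i := by
    have cases2 : ∀ i : Fin 2, i = m ∨ i = m' := by
      intro i; fin_cases i <;> fin_cases m <;> simp [hm']
    intro i
    have hBi : ∀ (j : Fin 2) (α : ℂ), A.mulVec (v j) = α • v j →
        B.mulVec (v j) = ((μ j : ℂ) - α) • v j := by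
      intro j α hAj
      have h2 := hv j
      rw [add_mulVec, hAj] at h2
      rw [sub_smul, ← h2]
      abel
    rcases cases2 i with rfl | rfl
    · exact ⟨_, _, hAvm, hBi _ _ hAvm⟩
    · exact ⟨_, _, hAvm', hBi _ _ hAvm'⟩
  have key : ∀ i, (A * B).mulVec (v i) = (B * A).mulVec (v i) := by
    intro i
    obtain ⟨α, β, hα, hβ⟩ := hB i
    rw [← mulVec_mulVec, ← mulVec_mulVec, hα, hβ, mulVec_smul, mulVec_smul, hα, hβ,
      smul_comm]
  have hall : ∀ w, (A * B).mulVec w = (B * A).mulVec w := by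
    intro w
    rw [expand w, mulVec_add, mulVec_add, mulVec_smul, mulVec_smul, mulVec_smul, mulVec_smul,
      key, key]
  ext i j
  have h6 := congrFun (hall (Pi.single j 1)) i
  simpa using h6

/-- For non-commuting 2×2 Hermitian matrices `A`, `B`, with orthonormal eigenbases
`v` of `A+B`, `x` of `A`, and `y` of `B`, all overlaps `vₘ† xₙ` and `vₘ† yₙ` are nonzero. -/
theorem overlaps_nonzero_of_not_commute
    (A B : Matrix (Fin 2) (Fin 2) ℂ)
    (hA : A.IsHermitian) (hB : B.IsHermitian) (hc : ¬ Commute A B)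
    (v x y : Fin 2 → Fin 2 → ℂ) (μ a b : Fin 2 → ℝ)
    (hvON : ∀ m n, dotProduct (star (v m)) (v n) = if m = n then 1 else 0)
    (hxON : ∀ m n, dotProduct (star (x m)) (x n) = if m = n then 1 else 0)
    (hyON : ∀ m n, dotProduct (star (y m)) (y n) = if m = n then 1 else 0)
    (hv : ∀ m, (A + B).mulVec (v m) = (μ m : ℂ) • v m)
    (hx : ∀ m, A.mulVec (x m) = (a m : ℂ) • x m)
    (hy : ∀ m, B.mulVec (y m) = (b m : ℂ) • y m) :
    ∀ m n, dotProduct (star (v m)) (x n) ≠ 0 ∧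
      dotProduct (star (v m)) (y n) ≠ 0 := by
  intro m n
  refine ⟨overlap_ne A B hc v x μ a hvON hxON hv hx m n,
    overlap_ne B A (fun h => hc h.symm) v y μ b hvON hyON (fun k => by rw [add_comm]; exact hv k) hy m n⟩
end

section
/- For real numbers a₁, a₂, b₁, b₂ and nonnegative weights p₁, p₂, q₁, q₂, r₁, r₂, s₁, s₂ with p₁+p₂ = q₁+q₂ = r₁+r₂ = s₁+s₂ = 1 and all weights strictly positive, if |p₁a₁ + q₁a₂ + r₁b₁ + s₁b₂| + |p₂a₁ + q₂a₂ + r₂b₁ + s₂b₂| = |a₁| + |a₂| + |b₁| + |b₂|, then a₁, a₂, b₁, b₂ all have the same sign (with 0 having the same sign as everything). -/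
/-!
Each row `∑ i, w k i * x i` of a column-stochastic combination has absolute value at most
`∑ i, w k i * |x i|`, and these bounds add up to `∑ i, |x i|`. Saturation therefore forces every
row to saturate its own triangle inequality, and a saturated triangle inequality means that all
summands share the sign of the sum. Strictly positive weights then transfer this sign to the `x i`.
-/

open Finset

variable {R : Type*} [CommRing R] [LinearOrder R] [IsStrictOrderedRing R]

namespace Finset

theorem forall_nonneg_of_sum_abs_eq_sum {G ι : Type*} [AddCommGroup G] [LinearOrder G]
    [IsOrderedAddMonoid G] {s : Finset ι} {f : ι → G}
    (h : ∑ i ∈ s, |f i| = ∑ i ∈ s, f i) : ∀ i ∈ s, 0 ≤ f i := by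
  have hf : ∀ i ∈ s, f i = |f i| :=
    (sum_eq_sum_iff_of_le fun i _ => le_abs_self (f i)).mp h.symm
  exact fun i hi => (hf i hi).symm ▸ abs_nonneg (f i)

theorem mul_nonneg_of_abs_sum_eq_sum_abs {ι : Type*} {s : Finset ι} {f : ι → R}
    (h : |∑ i ∈ s, f i| = ∑ i ∈ s, |f i|) {i j : ι} (hi : i ∈ s) (hj : j ∈ s) :
    0 ≤ f i * f j := by
  rcases abs_cases (∑ i ∈ s, f i) with ⟨habs, _⟩ | ⟨habs, _⟩
  · have hf := forall_nonneg_of_sum_abs_eq_sum (h.symm.trans habs)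
    exact mul_nonneg (hf i hi) (hf j hj)
  · have hf := forall_nonneg_of_sum_abs_eq_sum (f := fun i => -f i)
      (by simpa only [abs_neg, sum_neg_distrib] using h.symm.trans habs)
    exact mul_nonneg_of_nonpos_of_nonpos (neg_nonneg.mp (hf i hi)) (neg_nonneg.mp (hf j hj))

end Finset

section StochasticCombination

variable {κ ι : Type*} [Fintype κ] [Fintype ι] (w : κ → ι → R) (x : ι → R)

theorem sum_sum_abs_mul_eq_sum_abs (hw : ∀ k i, 0 ≤ w k i) (hcol : ∀ i, ∑ k, w k i = 1) :
    ∑ k, ∑ i, |w k i * x i| = ∑ i, |x i| := by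
  simp only [abs_mul, abs_of_nonneg (hw _ _)]
  rw [sum_comm]
  simp only [← sum_mul, hcol, one_mul]

theorem abs_sum_mul_eq_sum_abs_of_sum_abs_sum_mul_eq (hw : ∀ k i, 0 ≤ w k i)
    (hcol : ∀ i, ∑ k, w k i = 1) (h : ∑ k, |∑ i, w k i * x i| = ∑ i, |x i|) (k : κ) :
    |∑ i, w k i * x i| = ∑ i, |w k i * x i| :=
  (sum_eq_sum_iff_of_le fun _ _ => abs_sum_le_sum_abs _ _).mp
    (h.trans (sum_sum_abs_mul_eq_sum_abs w x hw hcol).symm) k (mem_univ k)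

theorem mul_nonneg_of_sum_abs_sum_mul_eq_sum_abs (hw : ∀ k i, 0 ≤ w k i)
    (hcol : ∀ i, ∑ k, w k i = 1) (h : ∑ k, |∑ i, w k i * x i| = ∑ i, |x i|) (k : κ)
    (i j : ι) (hi : 0 < w k i) (hj : 0 < w k j) : 0 ≤ x i * x j := by
  have hrow := abs_sum_mul_eq_sum_abs_of_sum_abs_sum_mul_eq w x hw hcol h k
  have hprod := mul_nonneg_of_abs_sum_eq_sum_abs hrow (mem_univ i) (mem_univ j)
  rw [mul_mul_mul_comm] at hprod
  exact nonneg_of_mul_nonneg_right hprod (mul_pos hi hj)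

end StochasticCombination

/-- Saturation of the triangle inequality for strictly positive convex combinations:
if `|p₁a₁ + q₁a₂ + r₁b₁ + s₁b₂| + |p₂a₁ + q₂a₂ + r₂b₁ + s₂b₂| = |a₁| + |a₂| + |b₁| + |b₂|`
with strictly positive weights whose pairs sum to 1, then `a₁, a₂, b₁, b₂` all have the
same sign (0 counting as having the same sign as everything). -/
theorem convex_combination_abs_saturation_same_sign
    (a₁ a₂ b₁ b₂ p₁ p₂ q₁ q₂ r₁ r₂ s₁ s₂ : ℝ)
    (hp₁ : 0 < p₁) (hp₂ : 0 < p₂) (hq₁ : 0 < q₁) (hq₂ : 0 < q₂)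
    (hr₁ : 0 < r₁) (hr₂ : 0 < r₂) (hs₁ : 0 < s₁) (hs₂ : 0 < s₂)
    (hps : p₁ + p₂ = 1) (hqs : q₁ + q₂ = 1) (hrs : r₁ + r₂ = 1) (hss : s₁ + s₂ = 1)
    (h : |p₁ * a₁ + q₁ * a₂ + r₁ * b₁ + s₁ * b₂| +
          |p₂ * a₁ + q₂ * a₂ + r₂ * b₁ + s₂ * b₂| =
        |a₁| + |a₂| + |b₁| + |b₂|) :
    0 ≤ a₁ * a₂ ∧ 0 ≤ a₁ * b₁ ∧ 0 ≤ a₁ * b₂ ∧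
      0 ≤ a₂ * b₁ ∧ 0 ≤ a₂ * b₂ ∧ 0 ≤ b₁ * b₂ := by
  let w : Fin 2 → Fin 4 → ℝ := ![![p₁, q₁, r₁, s₁], ![p₂, q₂, r₂, s₂]]
  let x : Fin 4 → ℝ := ![a₁, a₂, b₁, b₂]
  have hw : ∀ k i, 0 ≤ w k i := by
    intro k i
    fin_cases k <;> fin_cases i <;> simp [w] <;> positivity
  have hcol : ∀ i, ∑ k, w k i = 1 := by
    intro i
    fin_cases i <;> simpa [w, Fin.sum_univ_two]
  have hsat : ∑ k, |∑ i, w k i * x i| = ∑ i, |x i| := by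
    simpa [w, x, Fin.sum_univ_two, Fin.sum_univ_four, add_assoc] using h
  have key := mul_nonneg_of_sum_abs_sum_mul_eq_sum_abs w x hw hcol hsat 0
  exact ⟨key 0 1 hp₁ hq₁, key 0 2 hp₁ hr₁, key 0 3 hp₁ hs₁,
    key 1 2 hq₁ hr₁, key 1 3 hq₁ hs₁, key 2 3 hr₁ hs₁⟩
end
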